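/- Let h : ℕ → ℕ be monotone, γ and α ordinal terms below ε₀, and suppose h is eventually bounded by F_γ (the standard fast-growing function at level γ, built from the successor function). Then f_α, the fast-growing hierarchy built from h, is eventually bounded by F_{γ+α}; i.e., there exists x₀ such that for all x ≥ x₀, f_α(x) ≤ F_{γ+α}(x). -/

import Mathlib

/-- Ordinal terms below ε₀: a term is a list of exponents,
`cons β γ` denoting ω^β + γ. -/
inductive OT : Type
  | nil : OT
  | cons : OT → OT → OT
deriving DecidableEq

namespace OT

/-- The term 1 = ω^0. -/
def one : OT := cons nil nil

/-- Syntactic concatenation (direct sum) of ordinal terms. -/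
def add : OT → OT → OT
  | nil, b => b
  | cons e r, b => cons e (add r b)

/-- A term ω^{β₁}+...+ω^{β_m} is a successor iff m > 0 and β_m = 0. -/
def isSucc : OT → Bool
  | nil => false
  | cons e nil => e == nil
  | cons _ (cons e r) => isSucc (cons e r)

/-- Remove the last summand ω^0 of a successor term. -/
def pred : OT → OT
  | nil => nil
  | cons _ nil => nil
  | cons e (cons e' r) => cons e (pred (cons e' r))

/-- Limit terms. -/
def isLim (a : OT) : Prop := a ≠ nil ∧ isSucc a = false

/-- ω^β · n as an ordinal term. -/
def rep : ℕ → OT → OT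
  | 0, _ => nil
  | n + 1, β => cons β (rep n β)

/-- The standard assignment of fundamental sequences (with ω_x = x+1):
(γ+ω^{β+1})_x = γ+ω^β·(x+1) and (γ+ω^λ)_x = γ+ω^{λ_x}. -/
def fseq : OT → ℕ → OT
  | nil, _ => nil
  | cons β nil, x =>
      if β = nil then nil
      else if isSucc β then rep (x + 1) (pred β)
      else cons (fseq β x) nil
  | cons β (cons e r), x => cons β (fseq (cons e r) x)

/-- Syntactic ordering of terms (on CNF terms this is the ordinal ordering). -/
def lt : OT → OT → Prop
  | _, nil => False
  | nil, cons _ _ => True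
  | cons a r, cons b s => lt a b ∨ (a = b ∧ lt r s)

def le (a b : OT) : Prop := lt a b ∨ a = b

/-- Cantor normal form: exponents weakly decreasing, all in CNF. -/
def isCNF : OT → Prop
  | nil => True
  | cons b nil => isCNF b
  | cons b (cons e r) => isCNF b ∧ le e b ∧ isCNF (cons e r)

/-- Number of occurrences of the exponent β in a term. -/
def count (β : OT) : OT → ℕ
  | nil => 0
  | cons b r => (if b = β then 1 else 0) + count β r

/-- k-lean: every coefficient (at every level) is ≤ k. -/
def leanOrd (k : ℕ) : OT → Prop
  | nil => True
  | cons b r => count b (cons b r) ≤ k ∧ leanOrd k b ∧ leanOrd k r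

end OT

/-- Pointwise-at-x ordering: smallest transitive relation with
α ⊏_x α+1 and λ_x ⊏_x λ. -/
inductive Ptw (x : ℕ) : OT → OT → Prop
  | succ (a : OT) : Ptw x a (OT.add a OT.one)
  | lim (l : OT) : OT.isLim l → Ptw x (OT.fseq l x) l
  | trans {a b c : OT} : Ptw x a b → Ptw x b c → Ptw x a c

/-!
By induction on `b` along predecessors and fundamental sequences (well founded since both
lower the ordinal a term denotes), `f_b(y) ≤ F_{γ+b}(max y x₀)` for all `y`. At `b = 0` this
is the hypothesis on `h`, moved up to `max y x₀` by monotonicity of `h`. At a successor, the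
iterates of `f_{b-1}` are dominated by those of `F_{γ+b-1}`, and `F_{γ+b-1}` is inflationary,
so `y + 1 ≤ max y x₀ + 1` iterations suffice. At a limit, `(γ+b)_m = γ+b_m`, and
`b_y ⊑_m b_m` for `y ≤ m` in the pointwise ordering, along which the standard hierarchy `F`
is monotone.
-/

namespace OT

open Ordinal

theorem add_nil (a : OT) : add a nil = a := by
  induction a with
  | nil => rfl
  | cons e r _ ih => rw [add, ih]

theorem add_assoc (a b c : OT) : add (add a b) c = add a (add b c) := by
  induction a with
  | nil => rfl
  | cons e r _ ih => simp only [add, ih]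

theorem add_ne_nil (a : OT) {b : OT} (hb : b ≠ nil) : add a b ≠ nil := by
  cases a with
  | nil => exact hb
  | cons e r => exact OT.noConfusion

theorem isSucc_ne_nil {a : OT} (ha : isSucc a = true) : a ≠ nil := by
  rintro rfl
  exact Bool.false_ne_true ha

theorem isLim_cons_nil {e : OT} (he : e ≠ nil) : isLim (cons e nil) :=
  ⟨OT.noConfusion, by simpa [isSucc] using he⟩

theorem eq_nil_or_isSucc_or_isLim (a : OT) : a = nil ∨ isSucc a = true ∨ isLim a := by
  by_cases hn : a = nil
  · exact Or.inl hn
  · cases hs : isSucc a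
    · exact Or.inr (Or.inr ⟨hn, hs⟩)
    · exact Or.inr (Or.inl rfl)

section cons

variable (e : OT) {r : OT} (hr : r ≠ nil)
include hr

theorem isSucc_cons : isSucc (cons e r) = isSucc r := by
  cases r
  · contradiction
  · rfl

theorem pred_cons : pred (cons e r) = cons e (pred r) := by
  cases r
  · contradiction
  · rfl

theorem fseq_cons (x : ℕ) : fseq (cons e r) x = cons e (fseq r x) := by
  cases r
  · contradiction
  · rfl

end cons

theorem fseq_cons_nil_of_isSucc {e : OT} (he : isSucc e = true) (x : ℕ) :
    fseq (cons e nil) x = rep (x + 1) (pred e) := by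
  simp [fseq, isSucc_ne_nil he, he]

theorem fseq_cons_nil_of_isLim {e : OT} (he : isLim e) (x : ℕ) :
    fseq (cons e nil) x = cons (fseq e x) nil := by
  simp [fseq, he.1, he.2]

section add

variable (a : OT) {b : OT} (hb : b ≠ nil)
include hb

theorem isSucc_add : isSucc (add a b) = isSucc b := by
  induction a with
  | nil => rfl
  | cons e r _ ih => rw [add, isSucc_cons e (add_ne_nil r hb), ih]

theorem pred_add : pred (add a b) = add a (pred b) := by
  induction a with
  | nil => rfl
  | cons e r _ ih => rw [add, pred_cons e (add_ne_nil r hb), ih, add]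

theorem fseq_add (x : ℕ) : fseq (add a b) x = add a (fseq b x) := by
  induction a with
  | nil => rfl
  | cons e r _ ih => rw [add, fseq_cons e (add_ne_nil r hb), ih, add]

end add

theorem isLim_add (a : OT) {b : OT} (hb : isLim b) : isLim (add a b) :=
  ⟨add_ne_nil a hb.1, by rw [isSucc_add a hb.1]; exact hb.2⟩

theorem isSucc_add_one (a : OT) : isSucc (add a one) = true := by
  rw [isSucc_add a OT.noConfusion]
  rfl

theorem pred_add_one (a : OT) : pred (add a one) = a := by
  rw [pred_add a OT.noConfusion, show pred one = nil from rfl, add_nil]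

theorem rep_add (m n : ℕ) (c : OT) : rep (m + n) c = add (rep m c) (rep n c) := by
  induction m with
  | zero => rw [Nat.zero_add]; rfl
  | succ m ih => rw [Nat.succ_add, rep, ih]; rfl

theorem rep_ne_nil {n : ℕ} (hn : n ≠ 0) (c : OT) : rep n c ≠ nil := by
  cases n with
  | zero => contradiction
  | succ n => exact OT.noConfusion

theorem rep_succ' (n : ℕ) (c : OT) : rep (n + 1) c = add (rep n c) (cons c nil) :=
  rep_add n 1 c

noncomputable def toOrdinal : OT → Ordinal.{0}
  | nil => 0
  | cons b r => ω ^ toOrdinal b + toOrdinal r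

theorem toOrdinal_rep (n : ℕ) (c : OT) : toOrdinal (rep n c) = ω ^ toOrdinal c * n := by
  induction n with
  | zero => simp [rep, toOrdinal]
  | succ n ih => rw [rep, toOrdinal, ih, Nat.cast_succ, Nat.cast_add_one_comm, mul_one_add]

theorem toOrdinal_pos {a : OT} (ha : a ≠ nil) : 0 < toOrdinal a := by
  cases a with
  | nil => contradiction
  | cons b r => exact (opow_pos _ omega0_pos).trans_le (le_add_right le_rfl)

theorem toOrdinal_pred_lt {a : OT} (ha : a ≠ nil) : toOrdinal (pred a) < toOrdinal a := by
  induction a with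
  | nil => contradiction
  | cons e r _ ih =>
    by_cases hr : r = nil
    · subst hr
      exact toOrdinal_pos ha
    · rw [pred_cons e hr, toOrdinal, toOrdinal]
      exact add_lt_add_right (ih hr) _

theorem toOrdinal_fseq_lt {a : OT} (ha : a ≠ nil) (x : ℕ) :
    toOrdinal (fseq a x) < toOrdinal a := by
  induction a with
  | nil => contradiction
  | cons e r ihe ihr =>
    by_cases hr : r = nil
    · subst hr
      rcases eq_nil_or_isSucc_or_isLim e with rfl | he | he
      · exact toOrdinal_pos ha
      · have hpos : 0 < toOrdinal e := toOrdinal_pos (isSucc_ne_nil he)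
        have hlt : ω ^ toOrdinal (pred e) < ω ^ toOrdinal e :=
          (opow_lt_opow_iff_right one_lt_omega0).2 (toOrdinal_pred_lt (isSucc_ne_nil he))
        rw [fseq_cons_nil_of_isSucc he, toOrdinal_rep, toOrdinal, toOrdinal, add_zero]
        exact mul_lt_omega0_opow hpos hlt (natCast_lt_omega0 _)
      · rw [fseq_cons_nil_of_isLim he]
        simp only [toOrdinal, add_zero]
        exact (opow_lt_opow_iff_right one_lt_omega0).2 (ihe he.1)
    · rw [fseq_cons e hr, toOrdinal, toOrdinal]
      exact add_lt_add_right (ihr hr) _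

theorem fseq_induction {P : OT → Prop} (nil : P nil)
    (succ : ∀ a, isSucc a = true → P (pred a) → P a)
    (lim : ∀ a, isLim a → (∀ x, P (fseq a x)) → P a) (a : OT) : P a := by
  refine (InvImage.wf toOrdinal wellFounded_lt).induction a fun a ih => ?_
  rcases eq_nil_or_isSucc_or_isLim a with rfl | ha | ha
  · exact nil
  · exact succ a ha (ih _ (toOrdinal_pred_lt (isSucc_ne_nil ha)))
  · exact lim a ha fun x => ih _ (toOrdinal_fseq_lt ha.1 x)

end OT

namespace Ptw

open OT

variable {z : ℕ}

theorem cases_tail {c d : OT} (hcd : Ptw z c d) :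
    (isSucc d = true ∧ (c = pred d ∨ Ptw z c (pred d))) ∨
      (isLim d ∧ (c = fseq d z ∨ Ptw z c (fseq d z))) := by
  induction hcd with
  | succ a => exact Or.inl ⟨isSucc_add_one a, Or.inl (pred_add_one a).symm⟩
  | lim l hl => exact Or.inr ⟨hl, Or.inl rfl⟩
  | trans hcb _ _ ih =>
    rcases ih with ⟨hs, rfl | h⟩ | ⟨hl, rfl | h⟩
    · exact Or.inl ⟨hs, Or.inr hcb⟩
    · exact Or.inl ⟨hs, Or.inr (hcb.trans h)⟩
    · exact Or.inr ⟨hl, Or.inr hcb⟩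
    · exact Or.inr ⟨hl, Or.inr (hcb.trans h)⟩

theorem not_ptw_nil (c : OT) : ¬ Ptw z c nil := fun h => by
  rcases h.cases_tail with ⟨hs, _⟩ | ⟨hl, _⟩
  · exact Bool.false_ne_true hs
  · exact hl.1 rfl

theorem add_left (c : OT) {t t' : OT} (h : Ptw z t t') : Ptw z (add c t) (add c t') := by
  induction h with
  | succ a => rw [← add_assoc]; exact succ _
  | lim l hl => rw [← fseq_add c hl.1]; exact lim _ (isLim_add c hl)
  | trans _ _ ih₁ ih₂ => exact ih₁.trans ih₂

theorem self_add_cons_nil (e c : OT) : Ptw z c (add c (cons e nil)) := by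
  induction e using fseq_induction generalizing c with
  | nil => exact succ c
  | succ e he ih =>
    have hlim : isLim (add c (cons e nil)) := isLim_add c (isLim_cons_nil (isSucc_ne_nil he))
    have chain : ∀ n, Ptw z c (add c (rep (n + 1) (pred e))) := by
      intro n
      induction n with
      | zero => exact ih c
      | succ n ihn => rw [rep_succ', ← add_assoc]; exact ihn.trans (ih _)
    have hfseq : fseq (add c (cons e nil)) z = add c (rep (z + 1) (pred e)) := by
      rw [fseq_add c OT.noConfusion, fseq_cons_nil_of_isSucc he]
    exact (chain z).trans (hfseq ▸ lim _ hlim)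
  | lim e he ih =>
    have hlim : isLim (add c (cons e nil)) := isLim_add c (isLim_cons_nil he.1)
    have hfseq : fseq (add c (cons e nil)) z = add c (cons (fseq e z) nil) := by
      rw [fseq_add c OT.noConfusion, fseq_cons_nil_of_isLim he]
    exact (ih z c).trans (hfseq ▸ lim _ hlim)

theorem self_add (c : OT) {d : OT} (hd : d ≠ nil) : Ptw z c (add c d) := by
  induction d generalizing c with
  | nil => contradiction
  | cons e r _ ih =>
    by_cases hr : r = nil
    · subst hr
      exact self_add_cons_nil e c
    · have h := ih (add c (cons e nil)) hr
      rw [add_assoc] at h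
      exact (self_add_cons_nil e c).trans h

theorem cons_nil {b b' : OT} (h : Ptw z b b') : Ptw z (cons b nil) (cons b' nil) := by
  induction h with
  | succ a =>
    have hlim : isLim (cons (add a one) nil) := isLim_cons_nil (add_ne_nil a OT.noConfusion)
    have hfseq : fseq (cons (add a one) nil) z = rep (z + 1) a := by
      rw [fseq_cons_nil_of_isSucc (isSucc_add_one a), pred_add_one]
    have hlast : Ptw z (rep (z + 1) a) (cons (add a one) nil) := hfseq ▸ lim _ hlim
    cases z with
    | zero => exact hlast
    | succ n => exact (self_add (cons a nil) (z := n + 1) OT.noConfusion).trans hlast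
  | lim l hl =>
    rw [← fseq_cons_nil_of_isLim hl]
    exact lim _ (isLim_cons_nil hl.1)
  | trans _ _ ih₁ ih₂ => exact ih₁.trans ih₂

end Ptw

namespace OT

theorem fseq_eq_or_ptw_of_le {a : OT} (ha : isLim a) {y z : ℕ} (hyz : y ≤ z) :
    fseq a y = fseq a z ∨ Ptw z (fseq a y) (fseq a z) := by
  induction a with
  | nil => exact absurd rfl ha.1
  | cons e r ihe ihr =>
    by_cases hr : r = nil
    · subst hr
      rcases eq_nil_or_isSucc_or_isLim e with rfl | he | he
      · exact absurd ha.2 (by decide)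
      · rw [fseq_cons_nil_of_isSucc he, fseq_cons_nil_of_isSucc he]
        rcases hyz.eq_or_lt with rfl | hlt
        · exact Or.inl rfl
        · rw [show z + 1 = (y + 1) + (z - y) by omega, rep_add (y + 1)]
          exact Or.inr (Ptw.self_add _ (rep_ne_nil (n := z - y) (by omega) _))
      · rw [fseq_cons_nil_of_isLim he, fseq_cons_nil_of_isLim he]
        rcases ihe he with heq | h
        · exact Or.inl (heq ▸ rfl)
        · exact Or.inr h.cons_nil
    · rw [fseq_cons e hr, fseq_cons e hr]
      rcases ihr ⟨hr, isSucc_cons e hr ▸ ha.2⟩ with heq | h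
      · exact Or.inl (heq ▸ rfl)
      · exact Or.inr (h.add_left (cons e nil))

end OT

theorem monotone_iterate_succ_self {p : ℕ → ℕ} (hp : Monotone p) (hid : id ≤ p) :
    Monotone fun x => p^[x + 1] x := fun x y hxy =>
  (hp.iterate _ hxy).trans (Function.monotone_iterate_of_id_le hid (by omega : x + 1 ≤ y + 1) y)

theorem iterate_le_iterate_max {f q : ℕ → ℕ} {x₀ : ℕ} (hq : Monotone q) (hid : id ≤ q)
    (hf : ∀ u, f u ≤ q (max u x₀)) (n y : ℕ) : f^[n] y ≤ q^[n] (max y x₀) := by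
  induction n with
  | zero => exact le_max_left y x₀
  | succ n ih =>
    rw [Function.iterate_succ_apply', Function.iterate_succ_apply']
    refine (hf _).trans (hq (max_le ih ?_))
    exact (le_max_right y x₀).trans (Function.id_le_iterate_of_id_le hid n _)

structure IsFastGrowingHierarchy (h : ℕ → ℕ) (f : OT → ℕ → ℕ) : Prop where
  nil : ∀ x, f OT.nil x = h x
  succ : ∀ a x, OT.isSucc a = true → f a x = (f (OT.pred a))^[x + 1] x
  lim : ∀ a x, OT.isLim a → f a x = f (OT.fseq a x) x

namespace IsFastGrowingHierarchy

open OT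

section succBase

variable {F : OT → ℕ → ℕ} (hF : IsFastGrowingHierarchy (· + 1) F)
include hF

/-- The three properties have to be proved simultaneously: monotonicity at a limit needs the
comparison `F_{d_x}(x+1) ≤ F_{d_{x+1}}(x+1)` along `⊏_{x+1}`. -/
theorem id_le_and_monotone_and_le_of_ptw (d : OT) :
    id ≤ F d ∧ Monotone (F d) ∧ ∀ z c, Ptw z c d → F c z ≤ F d z := by
  induction d using fseq_induction with
  | nil =>
    rw [show F OT.nil = (· + 1) from funext hF.nil]
    exact ⟨Nat.le_succ, fun _ _ => Nat.succ_le_succ,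
      fun _ c h => absurd h (Ptw.not_ptw_nil c)⟩
  | succ d hd ih =>
    obtain ⟨hid, hmono, hptw⟩ := ih
    have hFd : F d = fun x => (F (pred d))^[x + 1] x := funext fun x => hF.succ d x hd
    have hpred_le : ∀ z, F (pred d) z ≤ F d z := fun z => by
      rw [hF.succ d z hd, Function.iterate_succ_apply]
      exact Function.id_le_iterate_of_id_le hid z _
    refine ⟨fun x => (hid x).trans (hpred_le x),
      hFd ▸ monotone_iterate_succ_self hmono hid, fun z c h => ?_⟩
    rcases h.cases_tail with ⟨_, rfl | h⟩ | ⟨hl, _⟩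
    · exact hpred_le z
    · exact (hptw z c h).trans (hpred_le z)
    · exact absurd (hl.2.symm.trans hd) Bool.false_ne_true
  | lim d hd ih =>
    refine ⟨fun x => hF.lim d x hd ▸ (ih x).1 x, monotone_nat_of_le_succ fun x => ?_,
      fun z c h => ?_⟩
    · rw [hF.lim d x hd, hF.lim d (x + 1) hd]
      refine (ih x).2.1 x.le_succ |>.trans ?_
      rcases fseq_eq_or_ptw_of_le hd x.le_succ with heq | h
      · rw [heq]
      · exact (ih (x + 1)).2.2 _ _ h
    · rw [hF.lim d z hd]
      rcases h.cases_tail with ⟨hs, _⟩ | ⟨_, rfl | h⟩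
      · exact absurd (hd.2.symm.trans hs) Bool.false_ne_true
      · exact le_rfl
      · exact (ih z).2.2 z c h

theorem id_le (d : OT) : id ≤ F d := (hF.id_le_and_monotone_and_le_of_ptw d).1

theorem monotone (d : OT) : Monotone (F d) := (hF.id_le_and_monotone_and_le_of_ptw d).2.1

theorem le_of_ptw {z : ℕ} {c d : OT} (h : Ptw z c d) : F c z ≤ F d z :=
  (hF.id_le_and_monotone_and_le_of_ptw d).2.2 z c h

end succBase

theorem apply_le_apply_add_max {h : ℕ → ℕ} {f F : OT → ℕ → ℕ}
    (hf : IsFastGrowingHierarchy h f) (hF : IsFastGrowingHierarchy (· + 1) F) (hh : Monotone h)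
    {g : OT} {x₀ : ℕ} (hx₀ : ∀ x ≥ x₀, h x ≤ F g x) (b : OT) (y : ℕ) :
    f b y ≤ F (add g b) (max y x₀) := by
  induction b using fseq_induction generalizing y with
  | nil =>
    rw [hf.nil, add_nil]
    exact (hh (le_max_left y x₀)).trans (hx₀ _ (le_max_right y x₀))
  | succ b hb ih =>
    have hb₀ : b ≠ OT.nil := isSucc_ne_nil hb
    set q := F (add g (pred b))
    calc f b y = (f (pred b))^[y + 1] y := hf.succ b y hb
      _ ≤ q^[y + 1] (max y x₀) := iterate_le_iterate_max (hF.monotone _) (hF.id_le _) ih _ _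
      _ ≤ q^[max y x₀ + 1] (max y x₀) :=
        Function.monotone_iterate_of_id_le (hF.id_le _) (by omega) _
      _ = F (add g b) (max y x₀) := by
        rw [hF.succ _ _ ((isSucc_add g hb₀).trans hb), pred_add g hb₀]
  | lim b hb ih =>
    calc f b y = f (fseq b y) y := hf.lim b y hb
      _ ≤ F (add g (fseq b y)) (max y x₀) := ih y y
      _ ≤ F (add g (fseq b (max y x₀))) (max y x₀) := by
        rcases fseq_eq_or_ptw_of_le hb (le_max_left y x₀) with heq | h
        · rw [heq]
        · exact hF.le_of_ptw (h.add_left g)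
      _ = F (add g b) (max y x₀) := by rw [hF.lim _ _ (isLim_add g hb), fseq_add g hb.1]

end IsFastGrowingHierarchy

/-- If monotone h is eventually bounded by F_γ (standard fast-growing
hierarchy, built from the successor), then the fast-growing hierarchy f built
from h satisfies: f_α is eventually bounded by F_{γ+α} (syntactic sum). -/
theorem stmt19 (h : ℕ → ℕ) (hmono : ∀ a b : ℕ, a ≤ b → h a ≤ h b)
    (f F : OT → ℕ → ℕ)
    (hf0 : ∀ x, f OT.nil x = h x)
    (hfs : ∀ a x, OT.isSucc a = true → f a x = (f (OT.pred a))^[x + 1] x)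
    (hfl : ∀ a x, OT.isLim a → f a x = f (OT.fseq a x) x)
    (hF0 : ∀ x, F OT.nil x = x + 1)
    (hFs : ∀ a x, OT.isSucc a = true → F a x = (F (OT.pred a))^[x + 1] x)
    (hFl : ∀ a x, OT.isLim a → F a x = F (OT.fseq a x) x)
    (g a : OT)
    (hev : ∃ x₀ : ℕ, ∀ x ≥ x₀, h x ≤ F g x) :
    ∃ x₀ : ℕ, ∀ x ≥ x₀, f a x ≤ F (OT.add g a) x := by
  obtain ⟨x₀, hx₀⟩ := hev
  refine ⟨x₀, fun x hx => ?_⟩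
  have hbound := IsFastGrowingHierarchy.apply_le_apply_add_max ⟨hf0, hfs, hfl⟩
    ⟨hF0, hFs, hFl⟩ (fun _ _ => hmono _ _) hx₀ a x
  rwa [max_eq_left hx] at hbound
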